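/- Let Π = [π_1,…,π_m] be a list of complete rankings over a finite set U of size n. A complete ranking π minimizes the LR-distance to the domain, LR(π,Π) = Σ_{i=1}^{m} LR(π,π_i), over all complete rankings if and only if π minimizes the Spearman footrule distance F(π,Π) = Σ_{i=1}^{m} F(π,π_i) over all complete rankings. -/
import Mathlib


/-- The LR-distance between two rankings `π, σ : U → ℕ`, restricted to the
rank interval `[a, b]`. -/
def LRint {U : Type*} [Fintype U] (π σ : U → ℕ) (a b : ℕ) : ℕ :=
  if h : b ≤ a then 0
  else
    (Finset.univ.filter (fun e => π e ≤ (a + b) / 2 ∧ (a + b) / 2 < σ e)).card +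
    (Finset.univ.filter (fun e => (a + b) / 2 < π e ∧ σ e ≤ (a + b) / 2)).card +
    LRint π σ a ((a + b) / 2) + LRint π σ ((a + b) / 2 + 1) b
termination_by b - a
decreasing_by
  all_goals omega

/-- The LR-distance between two complete rankings of size `n`. -/
def LRdist {U : Type*} [Fintype U] (π σ : U → ℕ) (n : ℕ) : ℕ :=
  LRint π σ 1 n

lemma LRint_eq_sum {U : Type*} [Fintype U] (π σ : U → ℕ) (a b : ℕ) :
    LRint π σ a b = ∑ k ∈ Finset.Ico a b,
      ((Finset.univ.filter (fun e => π e ≤ k ∧ k < σ e)).card +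
       (Finset.univ.filter (fun e => k < π e ∧ σ e ≤ k)).card) := by
  rw [LRint]
  split_ifs with h
  · rw [Finset.Ico_eq_empty (by omega), Finset.sum_empty]
  · have hmid : a ≤ (a + b) / 2 ∧ (a + b) / 2 < b := by omega
    rw [LRint_eq_sum π σ a ((a + b) / 2), LRint_eq_sum π σ ((a + b) / 2 + 1) b]
    conv_rhs => rw [← Finset.sum_Ico_consecutive _ (by omega : a ≤ (a + b) / 2 + 1)
        (by omega : (a + b) / 2 + 1 ≤ b),
      Finset.sum_Ico_succ_top (by omega : a ≤ (a + b) / 2)]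
    ring
termination_by b - a
decreasing_by all_goals omega

lemma LRdist_eq_footrule {U : Type*} [Fintype U] {n : ℕ} (π σ : U → ℕ)
    (hπ : ∀ e, π e ∈ Finset.Icc 1 n) (hσ : ∀ e, σ e ∈ Finset.Icc 1 n) :
    LRdist π σ n = ∑ e : U, ((π e : ℤ) - (σ e : ℤ)).natAbs := by
  rw [LRdist, LRint_eq_sum]
  have : ∀ k, (Finset.univ.filter (fun e => π e ≤ k ∧ k < σ e)).card +
       (Finset.univ.filter (fun e => k < π e ∧ σ e ≤ k)).card
       = ∑ e : U, ((if π e ≤ k ∧ k < σ e then 1 else 0) +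
                   (if k < π e ∧ σ e ≤ k then 1 else 0)) := by
    intro k
    rw [Finset.sum_add_distrib, Finset.sum_boole, Finset.sum_boole]
    push_cast
    rfl
  simp only [this]
  rw [Finset.sum_comm]
  refine Finset.sum_congr rfl fun e _ => ?_
  have h1 := hπ e
  have h2 := hσ e
  simp only [Finset.mem_Icc] at h1 h2
  rw [Finset.sum_add_distrib, Finset.sum_boole, Finset.sum_boole]
  have e1 : (Finset.Ico 1 n).filter (fun k => π e ≤ k ∧ k < σ e)
      = Finset.Ico (π e) (σ e) := by
    ext k; simp only [Finset.mem_filter, Finset.mem_Ico]; omega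
  have e2 : (Finset.Ico 1 n).filter (fun k => k < π e ∧ σ e ≤ k)
      = Finset.Ico (σ e) (π e) := by
    ext k; simp only [Finset.mem_filter, Finset.mem_Ico]; omega
  rw [e1, e2, Nat.card_Ico, Nat.card_Ico]
  push_cast
  omega

/-- Let `Π = [π_1,…,π_m]` be a list of complete rankings over
a finite set `U` of size `n`. A complete ranking `π` minimizes the LR-distance
`LR(π,Π) = Σ_i LR(π,π_i)` over all complete rankings iff it minimizes the
Spearman footrule distance `F(π,Π) = Σ_i F(π,π_i)` over all complete rankings. -/
theorem lr_minimizer_iff_footrule_minimizer {U : Type*} [Fintype U] {n m : ℕ}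
    (hU : Fintype.card U = n)
    (πs : Fin m → U → ℕ)
    (hπs_inj : ∀ i, Function.Injective (πs i))
    (hπs_mem : ∀ i, ∀ e, πs i e ∈ Finset.Icc 1 n)
    (π : U → ℕ)
    (hπinj : Function.Injective π) (hπmem : ∀ e, π e ∈ Finset.Icc 1 n) :
    (∀ τ : U → ℕ, Function.Injective τ → (∀ e, τ e ∈ Finset.Icc 1 n) →
        ∑ i : Fin m, LRdist π (πs i) n ≤ ∑ i : Fin m, LRdist τ (πs i) n)
      ↔ (∀ τ : U → ℕ, Function.Injective τ → (∀ e, τ e ∈ Finset.Icc 1 n) →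
        ∑ i : Fin m, ∑ e : U, ((π e : ℤ) - (πs i e : ℤ)).natAbs
          ≤ ∑ i : Fin m, ∑ e : U, ((τ e : ℤ) - (πs i e : ℤ)).natAbs) := by
  have key : ∀ τ : U → ℕ, (∀ e, τ e ∈ Finset.Icc 1 n) →
      ∑ i : Fin m, LRdist τ (πs i) n
        = ∑ i : Fin m, ∑ e : U, ((τ e : ℤ) - (πs i e : ℤ)).natAbs := by
    intro τ hτ
    exact Finset.sum_congr rfl fun i _ => LRdist_eq_footrule τ (πs i) hτ (hπs_mem i)
  constructor
  · intro h τ h1 h2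
    rw [← key π hπmem, ← key τ h2]
    exact h τ h1 h2
  · intro h τ h1 h2
    rw [key π hπmem, key τ h2]
    exact h τ h1 h2
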